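/- arXiv:1306.2000 — 2 statements merged into one kernel-verified Lean document; each statement's English description precedes it below -/
import Mathlib

section
/- Let H, γ ∈ (0,1) and c > 0, and define for 0 ≤ s ≤ t < ∞ the function V_Y²(s,t) = ((1−γ) t^{2H} + (γ²−γ) s^{2H} + γ (t−s)^{2H}) / (1 + ct − cγs)². Then V_Y attains its unique global maximum over the set B = {(s,t) : 0 ≤ s ≤ t < ∞} at the point (s̃₀, t̃₀) with s̃₀ = 0 and t̃₀ = H/(c(1−H)); that is, V_Y(s,t) < V_Y(0, t̃₀) for all (s,t) ∈ B with (s,t) ≠ (0, t̃₀), and moreover V_Y(0, t̃₀) = H^H (1−H)^{1−H} / c^H. -/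
/-- The variance function `V_Y²(s,t)` of the Gaussian field
`Y(s,t) = (X_H(t) − γ X_H(s))/(1 + ct − cγs)`. -/
noncomputable def VY2 (H γ c s t : ℝ) : ℝ :=
  ((1 - γ) * t ^ (2*H) + (γ^2 - γ) * s ^ (2*H) + γ * (t - s) ^ (2*H))
    / (1 + c * t - c * γ * s) ^ 2

/-- The standard deviation function `V_Y(s,t)`. -/
noncomputable def VY (H γ c s t : ℝ) : ℝ := Real.sqrt (VY2 H γ c s t)

/-!
Put `a = 2H` and `λ = 1 - γ`. For `s > 0` the numerator of `V_Y²(s,t)` equals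
`(t - γs)^a - (λ(1-λ)s^a - G)`, where `G` is the Jensen gap of `x ↦ x^a` at the points `t`,
`t - s` with weights `λ`, `1 - λ`. For `a ≤ 1` concavity gives `G ≤ 0`. For `1 ≤ a ≤ 2` the gap
decreases in `t - s`, its derivative being `a` times the (nonpositive) Jensen gap of the concave
`x ↦ x^(a-1)`, so `G ≤ (λ - λ^a)s^a < λ(1-λ)s^a`. Hence `V_Y²(s,t) < V_Y²(0, t - γs)`: the
maximum lies on the edge `s = 0`, where `V_Y(0,u) = u^H/(1+cu)`, and weighted AM–GM for `u` and
`t̃₀` with weights `H`, `1 - H` shows that `t̃₀` is its unique maximiser.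
-/

open Real Set

section JensenGap

variable {a w b p : ℝ}

lemma rpow_convex_combination_le (ha₀ : 0 ≤ a) (ha₁ : a ≤ 1) (hw₀ : 0 ≤ w) (hw₁ : w ≤ 1)
    (hb : 0 ≤ b) (hp : 0 ≤ p) :
    w * (b + p) ^ a + (1 - w) * b ^ a ≤ (b + w * p) ^ a := by
  have h := (concaveOn_rpow ha₀ ha₁).2 (mem_Ici.2 (add_nonneg hb hp)) (mem_Ici.2 hb) hw₀
    (sub_nonneg.2 hw₁) (add_sub_cancel w 1)
  simp only [smul_eq_mul] at h
  rwa [show w * (b + p) + (1 - w) * b = b + w * p by ring] at h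

lemma antitoneOn_rpow_jensen_gap (ha₁ : 1 ≤ a) (ha₂ : a ≤ 2) (hw₀ : 0 ≤ w) (hw₁ : w ≤ 1)
    (hp : 0 ≤ p) :
    AntitoneOn (fun b : ℝ => w * (b + p) ^ a + (1 - w) * b ^ a - (b + w * p) ^ a) (Ici 0) := by
  have hderiv : ∀ b : ℝ, 0 < b → HasDerivAt
      (fun b : ℝ => w * (b + p) ^ a + (1 - w) * b ^ a - (b + w * p) ^ a)
      (a * (w * (b + p) ^ (a - 1) + (1 - w) * b ^ (a - 1) - (b + w * p) ^ (a - 1))) b := by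
    intro b hb
    have h₁ := ((hasDerivAt_id b).add_const p).rpow_const (p := a) (Or.inl (by simp; positivity))
    have h₂ := (hasDerivAt_id b).rpow_const (p := a) (Or.inl hb.ne')
    have h₃ := ((hasDerivAt_id b).add_const (w * p)).rpow_const (p := a)
      (Or.inl (by simp; positivity))
    refine (((h₁.const_mul w).fun_add (h₂.const_mul (1 - w))).fun_sub h₃).congr_deriv ?_
    simp only [id]
    ring
  refine antitoneOn_of_deriv_nonpos (convex_Ici 0) ?_ ?_ ?_
  · have := continuous_rpow_const (by linarith : (0:ℝ) ≤ a)
    fun_prop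
  · rw [interior_Ici]
    exact fun b hb => (hderiv b hb).differentiableAt.differentiableWithinAt
  · rw [interior_Ici]
    intro b (hb : 0 < b)
    rw [(hderiv b hb).deriv]
    have := rpow_convex_combination_le (a := a - 1) (by linarith) (by linarith) hw₀ hw₁ hb.le hp
    exact mul_nonpos_of_nonneg_of_nonpos (by linarith) (by linarith)

theorem rpow_jensen_gap_lt (ha₀ : 0 < a) (ha₂ : a < 2) (hw₀ : 0 < w) (hw₁ : w < 1)
    (hb : 0 ≤ b) (hp : 0 < p) :
    w * (b + p) ^ a + (1 - w) * b ^ a - (b + w * p) ^ a < w * (1 - w) * p ^ a := by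
  rcases le_total a 1 with ha₁ | ha₁
  · have := rpow_convex_combination_le ha₀.le ha₁ hw₀.le hw₁.le hb hp.le
    have : 0 < w * (1 - w) * p ^ a := mul_pos (mul_pos hw₀ (sub_pos.2 hw₁)) (rpow_pos_of_pos hp a)
    linarith
  · have hw_sq : w ^ 2 < w ^ a := by
      simpa using rpow_lt_rpow_of_exponent_gt hw₀ hw₁ ha₂
    calc w * (b + p) ^ a + (1 - w) * b ^ a - (b + w * p) ^ a
        ≤ w * (0 + p) ^ a + (1 - w) * 0 ^ a - (0 + w * p) ^ a :=
          antitoneOn_rpow_jensen_gap ha₁ ha₂.le hw₀.le hw₁.le hp.le self_mem_Ici hb hb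
      _ = (w - w ^ a) * p ^ a := by
          rw [zero_rpow ha₀.ne', zero_add, zero_add, mul_rpow hw₀.le hp.le]; ring
      _ < (w - w ^ 2) * p ^ a := by gcongr
      _ = w * (1 - w) * p ^ a := by ring

end JensenGap

-- The left side is `Var(X_t - γ X_s)` for a fractional Brownian motion with `Var X_u = u^a`,
-- the right side is `Var X_(t - γs)`.
theorem rpow_combination_lt_rpow_sub_mul {a γ s t : ℝ} (ha₀ : 0 < a) (ha₂ : a < 2)
    (hγ₀ : 0 < γ) (hγ₁ : γ < 1) (hs : 0 < s) (hst : s ≤ t) :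
    (1 - γ) * t ^ a + (γ ^ 2 - γ) * s ^ a + γ * (t - s) ^ a < (t - γ * s) ^ a := by
  have h := rpow_jensen_gap_lt ha₀ ha₂ (sub_pos.2 hγ₁) (sub_lt_self 1 hγ₀) (sub_nonneg.2 hst) hs
  rw [sub_add_cancel, show t - s + (1 - γ) * s = t - γ * s by ring] at h
  linarith

section OneVariable

variable {H c : ℝ}

theorem rpow_div_one_add_mul_lt (hH₀ : 0 < H) (hH₁ : H < 1) (hc : 0 < c) {u : ℝ} (hu : 0 ≤ u)
    (hne : u ≠ H / (c * (1 - H))) :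
    u ^ H / (1 + c * u) < (H / (c * (1 - H))) ^ H / (1 + c * (H / (c * (1 - H)))) := by
  set t₀ := H / (c * (1 - H))
  have h1H : 0 < 1 - H := by linarith
  have ht₀ : 0 < t₀ := by positivity
  have hct₀ : c * t₀ = H * (1 + c * t₀) := by
    simp only [t₀]; field_simp; ring
  have hamgm : u ^ H * t₀ ^ (1 - H) < H * u + (1 - H) * t₀ :=
    (geom_mean_lt_arith_mean2_weighted_iff_of_pos hH₀ h1H hu ht₀.le (by ring)).2 hne
  have ht₀_split : t₀ ^ H * t₀ ^ (1 - H) = t₀ := by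
    rw [← rpow_add ht₀, add_sub_cancel, rpow_one]
  have hpow : 0 < t₀ ^ (1 - H) := rpow_pos_of_pos ht₀ _
  rw [div_lt_div_iff₀ (by positivity) (by positivity)]
  refine lt_of_mul_lt_mul_right ?_ (mul_pos hc hpow).le
  calc u ^ H * (1 + c * t₀) * (c * t₀ ^ (1 - H))
      = c * (u ^ H * t₀ ^ (1 - H)) * (1 + c * t₀) := by ring
    _ < c * (H * u + (1 - H) * t₀) * (1 + c * t₀) := by gcongr
    _ = c * t₀ * (1 + c * u) := by linear_combination c * (t₀ - u) * hct₀
    _ = c * (t₀ ^ H * t₀ ^ (1 - H)) * (1 + c * u) := by rw [ht₀_split]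
    _ = t₀ ^ H * (1 + c * u) * (c * t₀ ^ (1 - H)) := by ring

theorem rpow_div_one_add_mul_max_eq (hH₀ : 0 < H) (hH₁ : H < 1) (hc : 0 < c) :
    (H / (c * (1 - H))) ^ H / (1 + c * (H / (c * (1 - H))))
      = H ^ H * (1 - H) ^ (1 - H) / c ^ H := by
  have h1H : 0 < 1 - H := by linarith
  have hden : 1 + c * (H / (c * (1 - H))) = 1 / (1 - H) := by field_simp; ring
  rw [hden, div_rpow hH₀.le (by positivity), mul_rpow hc.le h1H.le, rpow_sub h1H, rpow_one]
  have : 0 < c ^ H := rpow_pos_of_pos hc H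
  have : 0 < (1 - H) ^ H := rpow_pos_of_pos h1H H
  field_simp

end OneVariable

section VY

variable {H γ c : ℝ}

theorem VY2_zero_left (hH : 0 < H) {u : ℝ} (hu : 0 ≤ u) :
    VY2 H γ c 0 u = (u ^ H / (1 + c * u)) ^ 2 := by
  rw [VY2, zero_rpow (by positivity), sub_zero, div_pow, ← rpow_mul_natCast hu, mul_comm H]
  push_cast
  ring

theorem VY2_lt_VY2_zero_left (hH₀ : 0 < H) (hH₁ : H < 1) (hγ₀ : 0 < γ) (hγ₁ : γ < 1)
    (hc : 0 < c) {s t : ℝ} (hs : 0 < s) (hst : s ≤ t) :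
    VY2 H γ c s t < VY2 H γ c 0 (t - γ * s) := by
  have hu : 0 < t - γ * s := by nlinarith
  rw [VY2_zero_left hH₀ hu.le, div_pow, ← rpow_mul_natCast hu.le, VY2,
    show 1 + c * t - c * γ * s = 1 + c * (t - γ * s) by ring]
  push_cast
  rw [mul_comm H]
  exact div_lt_div_of_pos_right
    (rpow_combination_lt_rpow_sub_mul (by linarith) (by linarith) hγ₀ hγ₁ hs hst) (by positivity)

theorem VY2_zero_left_lt_max (hH₀ : 0 < H) (hH₁ : H < 1) (hc : 0 < c) {u : ℝ} (hu : 0 ≤ u)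
    (hne : u ≠ H / (c * (1 - H))) :
    VY2 H γ c 0 u < VY2 H γ c 0 (H / (c * (1 - H))) := by
  have ht₀ : 0 < H / (c * (1 - H)) := div_pos hH₀ (mul_pos hc (sub_pos.2 hH₁))
  rw [VY2_zero_left hH₀ hu, VY2_zero_left hH₀ ht₀.le]
  exact pow_lt_pow_left₀ (rpow_div_one_add_mul_lt hH₀ hH₁ hc hu hne) (by positivity) two_ne_zero

end VY

/-- Lemma 3.1: `V_Y` attains its unique global maximum over `{0 ≤ s ≤ t < ∞}`
at `(0, H/(c(1−H)))`, with maximal value `H^H (1−H)^{1−H} / c^H`. -/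
theorem VY_unique_max (H γ c : ℝ)
    (hH : H ∈ Set.Ioo (0:ℝ) 1) (hγ : γ ∈ Set.Ioo (0:ℝ) 1) (hc : 0 < c) :
    (∀ s t : ℝ, 0 ≤ s → s ≤ t → (s, t) ≠ (0, H / (c * (1 - H))) →
      VY H γ c s t < VY H γ c 0 (H / (c * (1 - H)))) ∧
    VY H γ c 0 (H / (c * (1 - H))) = H ^ H * (1 - H) ^ (1 - H) / c ^ H := by
  obtain ⟨hH₀, hH₁⟩ := hH
  obtain ⟨hγ₀, hγ₁⟩ := hγ
  set t₀ := H / (c * (1 - H))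
  have ht₀ : 0 < t₀ := div_pos hH₀ (mul_pos hc (sub_pos.2 hH₁))
  have hmax_pos : 0 < VY2 H γ c 0 t₀ := by
    rw [VY2_zero_left hH₀ ht₀.le]
    positivity
  refine ⟨fun s t hs hst hne => ?_, ?_⟩
  · rw [VY, VY, sqrt_lt_sqrt_iff_of_pos hmax_pos]
    rcases hs.eq_or_lt with rfl | hs
    · exact VY2_zero_left_lt_max hH₀ hH₁ hc hst (fun h => hne (by rw [h]))
    · calc VY2 H γ c s t < VY2 H γ c 0 (t - γ * s) :=
            VY2_lt_VY2_zero_left hH₀ hH₁ hγ₀ hγ₁ hc hs hst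
        _ ≤ VY2 H γ c 0 t₀ := by
            rcases eq_or_ne (t - γ * s) t₀ with h | h
            · rw [h]
            · exact (VY2_zero_left_lt_max hH₀ hH₁ hc (by nlinarith) h).le
  · rw [VY, VY2_zero_left hH₀ ht₀.le, sqrt_sq (by positivity)]
    exact rpow_div_one_add_mul_max_eq hH₀ hH₁ hc
end

section
/- Let H ∈ (0,1). Then for all real numbers s, t with 1 ≤ s ≤ t, 2 − (t^{2H} + s^{2H} − (t−s)^{2H}) / (s^H t^H) ≤ (t−s)^{2H}. Equivalently, if X_H is a fractional Brownian motion with Hurst index H, then E[ ( X_H(t)/t^H − X_H(s)/s^H )² ] ≤ (t−s)^{2H} for all 1 ≤ s ≤ t. -/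
/-- For `1 ≤ s ≤ t`, `E[(X_H(t)/t^H − X_H(s)/s^H)²]
  = 2 − (t^{2H} + s^{2H} − (t−s)^{2H})/(s^H t^H) ≤ (t−s)^{2H}`. -/
theorem fbm_normalized_increment_bound (H : ℝ) (hH : H ∈ Set.Ioo (0:ℝ) 1) :
    ∀ s t : ℝ, 1 ≤ s → s ≤ t →
      2 - (t ^ (2*H) + s ^ (2*H) - (t - s) ^ (2*H)) / (s ^ H * t ^ H)
        ≤ (t - s) ^ (2*H) := by
  intro s t hs hst
  obtain ⟨hH0, hH1⟩ := hH
  have hs0 : (0:ℝ) < s := lt_of_lt_of_le one_pos hs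
  have ht0 : (0:ℝ) < t := lt_of_lt_of_le hs0 hst
  have hts : (0:ℝ) ≤ t - s := by linarith
  have ha : (0:ℝ) < s ^ H := Real.rpow_pos_of_pos hs0 H
  have hb : (0:ℝ) < t ^ H := Real.rpow_pos_of_pos ht0 H
  have hd : (0:ℝ) ≤ (t-s) ^ H := Real.rpow_nonneg hts H
  have ha1 : (1:ℝ) ≤ s ^ H := Real.one_le_rpow hs hH0.le
  have hb1 : (1:ℝ) ≤ t ^ H := Real.one_le_rpow (le_trans hs hst) hH0.le
  have e1 : t ^ (2*H) = (t ^ H)^2 := by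
    rw [show (2:ℝ)*H = H*2 by ring, Real.rpow_mul ht0.le, Real.rpow_two]
  have e2 : s ^ (2*H) = (s ^ H)^2 := by
    rw [show (2:ℝ)*H = H*2 by ring, Real.rpow_mul hs0.le, Real.rpow_two]
  have e3 : (t-s) ^ (2*H) = ((t-s) ^ H)^2 := by
    rw [show (2:ℝ)*H = H*2 by ring, Real.rpow_mul hts, Real.rpow_two]
  rw [e1, e2, e3, sub_le_iff_le_add, ← sub_le_iff_le_add', le_div_iff₀ (mul_pos ha hb)]
  nlinarith [sq_nonneg (t ^ H - s ^ H), mul_nonneg hd hd,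
    mul_le_mul ha1 hb1 zero_le_one (le_trans zero_le_one ha1)]
end
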